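/- Assume all relations are ≤, that the aggregated sparsity pattern graph G of B_0,...,B_m is a forest (contains no cycles), and that every edge of G is sign-definite, i.e., for every edge {i,j} of G either [B_k]_{ij} ≥ 0 for all k ∈ {0,...,m} or [B_k]_{ij} ≤ 0 for all k ∈ {0,...,m}. Then η(δ) = ζ(δ) for every δ ∈ ℝ^m. -/

import Mathlib

open Matrix BigOperators

noncomputable section

/-- Trace inner product `⟨A,X⟩ = Σᵢⱼ Aᵢⱼ Xᵢⱼ`. -/
def mInner {N : ℕ} (A X : Matrix (Fin N) (Fin N) ℝ) : ℝ :=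
  ∑ i, ∑ j, A i j * X i j

/-- The quadratic function `u ↦ (u,1)ᵀ B (u,1)` on `ℝⁿ`. -/
def quadF {n : ℕ} (B : Matrix (Fin (n + 1)) (Fin (n + 1)) ℝ) (u : Fin n → ℝ) : ℝ :=
  Fin.snoc u 1 ⬝ᵥ (B *ᵥ Fin.snoc u 1)

/-- A relation on `ℝ` is standard if it is `≤`, `=`, or `≥`. -/
def IsStdRel (r : ℝ → ℝ → Prop) : Prop :=
  r = (· ≤ ·) ∨ r = (· = ·) ∨ r = (· ≥ ·)

section Single

variable (nn m : ℕ) (B : Fin (m + 1) → Matrix (Fin (nn + 1)) (Fin (nn + 1)) ℝ)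

/-- Feasibility of `u` for QCQP(δ) (all relations `≤`). -/
def qcqpFeas (δ : Fin m → ℝ) (u : Fin nn → ℝ) : Prop :=
  ∀ k : Fin m, quadF (B k.succ) u ≤ δ k

/-- The optimal value `ζ(δ)` of QCQP(δ). -/
def qcqpVal (δ : Fin m → ℝ) : EReal :=
  sInf {y : EReal | ∃ u : Fin nn → ℝ,
    qcqpFeas nn m B δ u ∧ y = ((quadF (B 0) u : ℝ) : EReal)}

/-- Feasibility of `X` for the Shor relaxation SDPR(δ). -/
def sdprFeas (δ : Fin m → ℝ) (X : Matrix (Fin (nn + 1)) (Fin (nn + 1)) ℝ) : Prop :=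
  X.PosSemidef ∧ X (Fin.last nn) (Fin.last nn) = 1 ∧
    ∀ k : Fin m, mInner (B k.succ) X ≤ δ k

/-- The optimal value `η(δ)` of SDPR(δ). -/
def sdprVal (δ : Fin m → ℝ) : EReal :=
  sInf {y : EReal | ∃ X : Matrix (Fin (nn + 1)) (Fin (nn + 1)) ℝ,
    sdprFeas nn m B δ X ∧ y = ((mInner (B 0) X : ℝ) : EReal)}

end Single

/-- The aggregated sparsity pattern graph of the matrices `B₀,…,Bₘ`: vertices
`{1,…,n+1}`, with an edge `{i,j}` (`i ≠ j`) whenever some `Bₖ` has a nonzero `(i,j)`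
(or `(j,i)`) entry. -/
def aggGraph (nn m : ℕ) (B : Fin (m + 1) → Matrix (Fin (nn + 1)) (Fin (nn + 1)) ℝ) :
    SimpleGraph (Fin (nn + 1)) where
  Adj i j := i ≠ j ∧ ∃ k, B k i j ≠ 0 ∨ B k j i ≠ 0
  symm := by
    constructor
    rintro i j ⟨hij, k, hk⟩
    exact ⟨hij.symm, k, hk.symm⟩
  loopless := by
    constructor
    rintro i ⟨h, -⟩
    exact h rfl

/-!
On a forest every edge labelling by signs `σᵢⱼ = σⱼᵢ ∈ {±1}` is a coboundary: multiplying the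
labels along the unique path from a root gives `ε : V → {±1}` with `εᵢ εⱼ = σᵢⱼ` on edges.
Taking `σᵢⱼ` opposite to the common sign of the entries `[B_k]ᵢⱼ`, round a feasible `X` to
`vᵢ = εᵢ √Xᵢᵢ`. Diagonal terms of `⟨B_k, v vᵀ⟩` and `⟨B_k, X⟩` agree, and off the diagonal
`[B_k]ᵢⱼ vᵢ vⱼ = -|[B_k]ᵢⱼ| √(Xᵢᵢ Xⱼⱼ) ≤ [B_k]ᵢⱼ Xᵢⱼ` by the `2 × 2` minors of `X`. Rooting
`ε` at the last vertex gives `v = (u, 1)`, a QCQP-feasible point with `f₀(u) ≤ ⟨B₀, X⟩`.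
-/

namespace SimpleGraph

variable {V α : Type*} {G : SimpleGraph V}

namespace Walk

def labelProd [Monoid α] (σ : V → V → α) {u v : V} (p : G.Walk u v) : α :=
  (p.darts.map fun d => σ d.fst d.snd).prod

@[simp]
lemma labelProd_concat [Monoid α] (σ : V → V → α) {u v w : V} (p : G.Walk u v) (h : G.Adj v w) :
    (p.concat h).labelProd σ = p.labelProd σ * σ v w := by
  simp [labelProd, darts_concat]

@[simp]
lemma labelProd_copy [Monoid α] (σ : V → V → α) {u v u' v' : V} (p : G.Walk u v) (hu : u = u')
    (hv : v = v') : (p.copy hu hv).labelProd σ = p.labelProd σ := by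
  subst hu hv; rfl

end Walk

/-- One of two paths from `r` to adjacent vertices is the other one extended by their edge. -/
lemma IsAcyclic.labelProd_eq_mul_of_adj [Group α] (hG : G.IsAcyclic) {σ : V → V → α}
    (hσ : ∀ v w, G.Adj v w → σ w v = (σ v w)⁻¹) {r v w : V} {p : G.Walk r v} {q : G.Walk r w}
    (hp : p.IsPath) (hq : q.IsPath) (hadj : G.Adj v w) :
    q.labelProd σ = p.labelProd σ * σ v w := by
  by_cases hv : v ∈ q.support
  · rw [hG.path_concat hp hq hadj hv, Walk.labelProd_concat]
  · have hw := hG.mem_support_of_ne_mem_support_of_adj_of_isPath hp hq hadj hv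
    rw [hG.path_concat hq hp hadj.symm hw, Walk.labelProd_concat, hσ v w hadj,
      inv_mul_cancel_right]

theorem IsAcyclic.exists_potential [Group α] (hG : G.IsAcyclic) (σ : V → V → α)
    (hσ : ∀ v w, G.Adj v w → σ w v = (σ v w)⁻¹) (r : V) :
    ∃ ε : V → α, ε r = 1 ∧ ∀ v w, G.Adj v w → ε w = ε v * σ v w := by
  obtain ⟨root, hreach, hroot⟩ : ∃ root : V → V,
      (∀ v, G.Reachable (root v) v) ∧ ∀ ⦃v w⦄, G.Adj v w → root v = root w :=
    ⟨fun v => (G.connectedComponentMk v).out, fun v => ConnectedComponent.exact (Quot.out_eq _),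
      fun v w h => congrArg Quot.out (ConnectedComponent.sound h.reachable)⟩
  choose path hpath using fun v => (hreach v).exists_isPath
  refine ⟨fun v => ((path r).labelProd σ)⁻¹ * (path v).labelProd σ, inv_mul_cancel _,
    fun v w hadj => ?_⟩
  have := hG.labelProd_eq_mul_of_adj hσ (hpath v)
    (q := (path w).copy (hroot hadj).symm rfl) (by simpa using hpath w) hadj
  rw [Walk.labelProd_copy] at this
  simp only [this, mul_assoc]

end SimpleGraph

lemma mInner_vecMulVec {N : ℕ} (B : Matrix (Fin N) (Fin N) ℝ) (x : Fin N → ℝ) :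
    mInner B (vecMulVec x x) = x ⬝ᵥ (B *ᵥ x) := by
  simp only [mInner, dotProduct, mulVec, vecMulVec_apply, Finset.mul_sum]
  exact Finset.sum_congr rfl fun i _ => Finset.sum_congr rfl fun j _ => by ring

lemma Matrix.PosSemidef.abs_apply_le_sqrt_mul_sqrt {n : Type*} [Fintype n]
    {X : Matrix n n ℝ} (hX : X.PosSemidef) (i j : n) : |X i j| ≤ √(X i i) * √(X j j) := by
  have hdet := (hX.submatrix ![i, j]).det_nonneg
  rw [det_fin_two] at hdet
  have hsymm : X j i = X i j := hX.isHermitian.apply i j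
  simp only [submatrix_apply, Matrix.cons_val_zero, Matrix.cons_val_one, hsymm] at hdet
  rw [← Real.sqrt_mul hX.diag_nonneg]
  exact Real.abs_le_sqrt (by nlinarith)

lemma mInner_vecMulVec_le {N : ℕ} {B X : Matrix (Fin N) (Fin N) ℝ} (hX : X.PosSemidef)
    {ε : Fin N → ℝ} (hε : ∀ i, ε i = 1 ∨ ε i = -1) (hB : ∀ i j, i ≠ j → ε i * ε j * B i j ≤ 0) :
    mInner B (vecMulVec (fun i => ε i * √(X i i)) (fun i => ε i * √(X i i))) ≤ mInner B X := by
  refine Finset.sum_le_sum fun i _ => Finset.sum_le_sum fun j _ => ?_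
  simp only [vecMulVec_apply]
  rcases eq_or_ne i j with rfl | hij
  · have : ε i * ε i = 1 := by rcases hε i with h | h <;> simp [h]
    rw [mul_mul_mul_comm, this, one_mul, Real.mul_self_sqrt hX.diag_nonneg]
  · have hb := hB i j hij
    have hx := abs_le.mp (hX.abs_apply_le_sqrt_mul_sqrt i j)
    rcases hε i with hi | hi <;> rcases hε j with hj | hj <;> simp only [hi, hj] at hb ⊢ <;>
      nlinarith

lemma quadF_eq_mInner_vecMulVec {n : ℕ} (B : Matrix (Fin (n + 1)) (Fin (n + 1)) ℝ)
    (u : Fin n → ℝ) : quadF B u = mInner B (vecMulVec (Fin.snoc u 1) (Fin.snoc u 1)) :=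
  (mInner_vecMulVec B _).symm

section Relaxation

variable {nn m : ℕ} {B : Fin (m + 1) → Matrix (Fin (nn + 1)) (Fin (nn + 1)) ℝ}

lemma sdprVal_le_qcqpVal (δ : Fin m → ℝ) : sdprVal nn m B δ ≤ qcqpVal nn m B δ := by
  refine le_sInf ?_
  rintro _ ⟨u, hu, rfl⟩
  refine sInf_le ⟨vecMulVec (Fin.snoc u 1) (Fin.snoc u 1), ⟨?_, ?_, fun k => ?_⟩, ?_⟩
  · simpa using posSemidef_vecMulVec_self_star (Fin.snoc u 1 : Fin (nn + 1) → ℝ)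
  · simp [vecMulVec_apply]
  · exact quadF_eq_mInner_vecMulVec _ u ▸ hu k
  · rw [quadF_eq_mInner_vecMulVec]

lemma qcqpVal_le_sdprVal_of_rounding (δ : Fin m → ℝ)
    (hround : ∀ X : Matrix (Fin (nn + 1)) (Fin (nn + 1)) ℝ, X.PosSemidef →
      X (Fin.last nn) (Fin.last nn) = 1 → ∃ u, ∀ k, quadF (B k) u ≤ mInner (B k) X) :
    qcqpVal nn m B δ ≤ sdprVal nn m B δ := by
  refine le_sInf ?_
  rintro _ ⟨X, ⟨hX, hX_last, hX_feas⟩, rfl⟩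
  obtain ⟨u, hu⟩ := hround X hX hX_last
  calc qcqpVal nn m B δ ≤ ((quadF (B 0) u : ℝ) : EReal) :=
        sInf_le ⟨u, fun k => (hu k.succ).trans (hX_feas k), rfl⟩
    _ ≤ ((mInner (B 0) X : ℝ) : EReal) := EReal.coe_le_coe (hu 0)

lemma exists_signature_offDiag_nonpos (hBsymm : ∀ k, (B k).IsSymm)
    (hforest : (aggGraph nn m B).IsAcyclic)
    (hsign : ∀ i j : Fin (nn + 1), (aggGraph nn m B).Adj i j →
      (∀ k, 0 ≤ B k i j) ∨ (∀ k, B k i j ≤ 0)) :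
    ∃ ε : Fin (nn + 1) → ℝ, ε (Fin.last nn) = 1 ∧ (∀ i, ε i = 1 ∨ ε i = -1) ∧
      ∀ k i j, i ≠ j → ε i * ε j * B k i j ≤ 0 := by
  classical
  let σ : Fin (nn + 1) → Fin (nn + 1) → ℤˣ := fun i j => if ∀ k, 0 ≤ B k i j then -1 else 1
  have hσ : ∀ i j, (aggGraph nn m B).Adj i j → σ j i = (σ i j)⁻¹ := by
    intro i j _
    simp only [σ, Int.units_inv_eq_self, (hBsymm _).apply i j]
  obtain ⟨η, hη_last, hη⟩ := hforest.exists_potential σ hσ (Fin.last nn)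
  refine ⟨fun i => ((η i : ℤ) : ℝ), by simp [hη_last], fun i => ?_, fun k i j hij => ?_⟩
  · rcases Int.units_eq_one_or (η i) with h | h <;> simp [h]
  by_cases hadj : (aggGraph nn m B).Adj i j
  · have hσ_eq : η i * η j = σ i j := by
      rw [hη i j hadj, ← mul_assoc, Int.units_mul_self, one_mul]
    have hcast : ((η i : ℤ) : ℝ) * ((η j : ℤ) : ℝ) = ((σ i j : ℤ) : ℝ) := by
      rw [← hσ_eq]; push_cast; rfl
    rw [hcast]
    by_cases hpos : ∀ k, 0 ≤ B k i j
    · simp [σ, hpos]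
    · simpa [σ, hpos] using (hsign i j hadj).resolve_left hpos k
  · have : B k i j = 0 := by
      by_contra hne
      exact hadj ⟨hij, k, Or.inl hne⟩
    simp [this]

end Relaxation

theorem forest_sign_definite_sdpr_exact_general
    (nn m : ℕ)
    (B : Fin (m + 1) → Matrix (Fin (nn + 1)) (Fin (nn + 1)) ℝ)
    (hBsymm : ∀ k, (B k).IsSymm)
    (hforest : (aggGraph nn m B).IsAcyclic)
    (hsign : ∀ i j : Fin (nn + 1), (aggGraph nn m B).Adj i j →
      (∀ k, 0 ≤ B k i j) ∨ (∀ k, B k i j ≤ 0)) :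
    ∀ δ : Fin m → ℝ, sdprVal nn m B δ = qcqpVal nn m B δ := by
  obtain ⟨ε, hε_last, hε, hεB⟩ := exists_signature_offDiag_nonpos hBsymm hforest hsign
  intro δ
  refine le_antisymm (sdprVal_le_qcqpVal δ)
    (qcqpVal_le_sdprVal_of_rounding δ fun X hX hX_last => ?_)
  set v : Fin (nn + 1) → ℝ := fun i => ε i * √(X i i)
  have hv_last : v (Fin.last nn) = 1 := by simp [v, hε_last, hX_last]
  refine ⟨Fin.init v, fun k => ?_⟩
  rw [quadF_eq_mInner_vecMulVec, ← hv_last, Fin.snoc_init_self]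
  exact mInner_vecMulVec_le hX hε (hεB k)

/-- **Corollary 4.4 (ii).** If all relations are `≤`, the aggregated sparsity pattern
graph is a forest, and every edge is sign-definite, then `η(δ) = ζ(δ)` for every `δ`. -/
theorem forest_sign_definite_sdpr_exact
    (nn m : ℕ) (hnn : 0 < nn) (hm : 0 < m)
    (B : Fin (m + 1) → Matrix (Fin (nn + 1)) (Fin (nn + 1)) ℝ)
    (hBsymm : ∀ k, (B k).IsSymm)
    (hBcorner : ∀ k, B k (Fin.last nn) (Fin.last nn) = 0)
    (hforest : (aggGraph nn m B).IsAcyclic)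
    (hsign : ∀ i j : Fin (nn + 1), (aggGraph nn m B).Adj i j →
      (∀ k, 0 ≤ B k i j) ∨ (∀ k, B k i j ≤ 0)) :
    ∀ δ : Fin m → ℝ, sdprVal nn m B δ = qcqpVal nn m B δ :=
  forest_sign_definite_sdpr_exact_general nn m B hBsymm hforest hsign
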